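/- Assume x ≥ 0 and that at least one admissible control for (t,y) exists. Then z* := sSup { z ∈ ℝ : z ≤ 0 and W(t,x,y,z) = 0 } satisfies W(t,x,y,z*) = 0; moreover there exists a control u* admissible for (t,y) with ∫_t^T P(s)·(u*(s) − ū) ds ≥ z*, and every such u* is optimal for the constrained problem: ∫_t^T P(s)·u*(s) ds = sSup { ∫_t^T P(s)·u(s) ds : u admissible for (t,y) }. -/

import Mathlib

open MeasureTheory

noncomputable section

/-- A control: measurable, valued in `[0, ubar]` a.e. on `[t, T]`. -/
def IsControl (t T ubar : ℝ) (u : ℝ → ℝ) : Prop :=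
  Measurable u ∧ ∀ᵐ s ∂(volume : Measure ℝ), s ∈ Set.Icc t T → u s ∈ Set.Icc 0 ubar

/-- Reservoir level `Y^{t,y,u}(s) = y + ∫_t^s (β(r) − u(r)) dr`. -/
def traj (t : ℝ) (β : ℝ → ℝ) (y : ℝ) (u : ℝ → ℝ) (s : ℝ) : ℝ :=
  y + ∫ r in t..s, (β r - u r)

/-- A control admissible for `(t, y)`: the trajectory stays in `K = [0, ybar]` on `[t, T]`. -/
def Admissible (t T ubar ybar : ℝ) (β : ℝ → ℝ) (y : ℝ) (u : ℝ → ℝ) : Prop :=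
  IsControl t T ubar u ∧ ∀ s ∈ Set.Icc t T, traj t β y u s ∈ Set.Icc 0 ybar

/-- Deterministic price `P(s) = x e^{b(s−t)}`. -/
def price (t x b s : ℝ) : ℝ := x * Real.exp (b * (s - t))

/-- Cost functional of the level-set (auxiliary) problem. -/
def levelCost (t T ubar ybar x b : ℝ) (β : ℝ → ℝ) (y z : ℝ) (u : ℝ → ℝ) : ℝ :=
  max (z - ∫ s in t..T, price t x b s * (u s - ubar)) 0
    + ∫ s in t..T, Metric.infDist (traj t β y u s) (Set.Icc 0 ybar)

/-- The level-set function `W`. -/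
def W (t T ubar ybar x b : ℝ) (β : ℝ → ℝ) (y z : ℝ) : ℝ :=
  sInf {c : ℝ | ∃ u, IsControl t T ubar u ∧ c = levelCost t T ubar ybar x b β y z u}

/-- `G(t,x) = ū ∫_t^T P(s) ds`. -/
def G (t T ubar x b : ℝ) : ℝ := ubar * ∫ s in t..T, price t x b s

open Set Filter Topology
open scoped BoundedContinuousFunction

/-!
The constrained supremum is attained. A control is determined by its cumulative discharge
`s ↦ ∫_t^s u`, and these form a compact set of monotone `ū`-Lipschitz functions on `[t, T]`
(Arzelà–Ascoli); a Lipschitz function is the integral of its derivative, so every uniform limit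
is again a cumulative discharge. After an integration by parts, the revenue `∫ P u` and the
constraint violation `∫ dist (Y, K)` are both continuous in the cumulative discharge. Since
`W z = 0` yields controls with profit almost `z` and violation almost `0`, a limit of such
controls along `z ↑ z*` is admissible with profit at least `z*`. Conversely an admissible `u`
gives `W (∫ P (u - ū)) = 0`, so `z*` is exactly the maximal profit.
-/

section

variable {t T ubar : ℝ} {u : ℝ → ℝ}

def cumulativeSet (htT : t ≤ T) (ubar : ℝ) : Set (Icc t T →ᵇ ℝ) :=
  {F | F ⟨t, left_mem_Icc.2 htT⟩ = 0 ∧ Monotone F ∧ LipschitzWith ubar.toNNReal F}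

theorem isClosed_cumulativeSet (htT : t ≤ T) : IsClosed (cumulativeSet htT ubar) := by
  have hcoe : Continuous fun (F : Icc t T →ᵇ ℝ) (p : Icc t T) => F p :=
    BoundedContinuousFunction.continuous_coe
  exact (isClosed_eq (continuous_eval_const _) continuous_const).inter
    ((isClosed_monotone.preimage hcoe).inter
      ((isClosed_setOfPred_lipschitzWith ubar.toNNReal).preimage hcoe))

theorem mem_Icc_of_mem_cumulativeSet (htT : t ≤ T) {F : Icc t T →ᵇ ℝ}
    (hF : F ∈ cumulativeSet htT ubar) (p : Icc t T) :
    F p ∈ Icc 0 (ubar.toNNReal * (T - t)) := by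
  obtain ⟨h0, hmono, hlip⟩ := hF
  have htp : (⟨t, left_mem_Icc.2 htT⟩ : Icc t T) ≤ p := p.2.1
  have hdist := hlip.dist_le_mul p ⟨t, left_mem_Icc.2 htT⟩
  rw [Real.dist_eq, Subtype.dist_eq, Real.dist_eq, h0, sub_zero,
    abs_of_nonneg (h0 ▸ hmono htp), abs_of_nonneg (sub_nonneg.2 p.2.1)] at hdist
  exact ⟨h0 ▸ hmono htp, hdist.trans (by gcongr; exact p.2.2)⟩

theorem isCompact_cumulativeSet (htT : t ≤ T) : IsCompact (cumulativeSet htT ubar) :=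
  BoundedContinuousFunction.arzela_ascoli₂ _ isCompact_Icc _ (isClosed_cumulativeSet htT)
    (fun _ p hF => mem_Icc_of_mem_cumulativeSet htT hF p)
    (LipschitzWith.uniformEquicontinuous _ _ fun F => F.2.2.2).equicontinuous

theorem IsControl.ae_mem_of_subset (hu : IsControl t T ubar u) {s : Set ℝ} (hs : s ⊆ Icc t T) :
    ∀ᵐ r, r ∈ s → u r ∈ Icc 0 ubar :=
  hu.2.mono fun _ hr hrs => hr (hs hrs)

theorem IsControl.integrableOn (hu : IsControl t T ubar u) : IntegrableOn u (Icc t T) :=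
  Measure.integrableOn_of_bounded measure_Icc_lt_top.ne hu.1.aestronglyMeasurable
    (M := ubar) ((ae_restrict_iff' measurableSet_Icc).2 <| hu.2.mono fun _ hr hrs =>
      (Real.norm_of_nonneg (hr hrs).1).trans_le (hr hrs).2)

theorem IsControl.intervalIntegrable (hu : IsControl t T ubar u) {p q : ℝ}
    (hp : p ∈ Icc t T) (hq : q ∈ Icc t T) : IntervalIntegrable u volume p q :=
  (hu.integrableOn.mono_set (uIcc_subset_Icc hp hq)).intervalIntegrable

def cumulative (htT : t ≤ T) (hu : IsControl t T ubar u) : Icc t T →ᵇ ℝ :=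
  .mkOfCompact ⟨fun p => ∫ r in t..p, u r, by
    have h := intervalIntegral.continuousOn_primitive_interval (μ := volume)
      (uIcc_of_le htT ▸ hu.integrableOn)
    rw [uIcc_of_le htT] at h
    exact h.domRestrict⟩

theorem cumulative_apply (htT : t ≤ T) (hu : IsControl t T ubar u) (p : Icc t T) :
    cumulative htT hu p = ∫ r in t..p, u r := rfl

theorem IccExtend_cumulative (htT : t ≤ T) (hu : IsControl t T ubar u) {s : ℝ}
    (hs : s ∈ Icc t T) : IccExtend htT (cumulative htT hu) s = ∫ r in t..s, u r :=
  IccExtend_of_mem htT _ hs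

theorem cumulative_mem_cumulativeSet (htT : t ≤ T) (hu : IsControl t T ubar u) :
    cumulative htT hu ∈ cumulativeSet htT ubar := by
  have hsub (p q : Icc t T) : cumulative htT hu q - cumulative htT hu p = ∫ r in p..q, u r :=
    intervalIntegral.integral_interval_sub_left (hu.intervalIntegrable (left_mem_Icc.2 htT) q.2)
      (hu.intervalIntegrable (left_mem_Icc.2 htT) p.2)
  refine ⟨intervalIntegral.integral_same, fun p q hpq => ?_, .of_dist_le_mul fun p q => ?_⟩
  · have := intervalIntegral.integral_nonneg_of_ae_restrict (μ := volume) (f := u) hpq <|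
      (ae_restrict_iff' measurableSet_Icc).2 <|
        (hu.ae_mem_of_subset (Icc_subset_Icc p.2.1 q.2.2)).mono fun _ hr hrs => (hr hrs).1
    linarith [hsub p q]
  · rw [Real.dist_eq, ← abs_neg, neg_sub, hsub, Subtype.dist_eq, Real.dist_eq, abs_sub_comm,
      ← Real.norm_eq_abs]
    refine intervalIntegral.norm_integral_le_of_norm_le_const_ae ?_
    refine (hu.ae_mem_of_subset ((uIoc_subset_uIcc).trans (uIcc_subset_Icc p.2 q.2))).mono
      fun r hr hrs => ?_
    rw [Real.norm_of_nonneg (hr hrs).1]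
    exact (hr hrs).2.trans (le_max_left _ _)

theorem exists_cumulative_eq (htT : t ≤ T) (hub : 0 ≤ ubar) {F : Icc t T →ᵇ ℝ}
    (hF : F ∈ cumulativeSet htT ubar) :
    ∃ u, ∃ hu : IsControl t T ubar u, cumulative htT hu = F := by
  obtain ⟨h0, hmono, hlip⟩ := hF
  have hg_mono : Monotone (IccExtend htT F) := hmono.IccExtend htT
  have hg_lip : LipschitzWith ubar.toNNReal (IccExtend htT F) :=
    mul_one ubar.toNNReal ▸ hlip.comp (LipschitzWith.projIcc htT)
  have hderiv (s : ℝ) : deriv (IccExtend htT F) s ∈ Icc 0 ubar := by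
    refine ⟨hg_mono.deriv_nonneg, (le_abs_self _).trans ?_⟩
    simpa [Real.coe_toNNReal _ hub] using norm_deriv_le_of_lipschitz (x₀ := s) hg_lip
  have hu : IsControl t T ubar (deriv (IccExtend htT F)) :=
    ⟨measurable_deriv _, ae_of_all _ fun s _ => hderiv s⟩
  refine ⟨_, hu, ?_⟩
  ext p
  rw [cumulative_apply, hg_lip.lipschitzOnWith.absolutelyContinuousOnInterval.integral_deriv_eq_sub,
    IccExtend_of_mem htT F p.2, IccExtend_left, h0, sub_zero]

section Revenue

variable {x b : ℝ}

theorem contDiff_price : ContDiff ℝ 1 (price t x b) := by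
  unfold price
  fun_prop

/-- The Stieltjes integral `∫ P dF`, integrated by parts so that it is continuous in `F`. -/
def revenue (htT : t ≤ T) (x b : ℝ) (F : Icc t T →ᵇ ℝ) : ℝ :=
  price t x b T * IccExtend htT F T - ∫ r in t..T, deriv (price t x b) r * IccExtend htT F r

theorem continuous_revenue (htT : t ≤ T) : Continuous (revenue htT x b) := by
  have hderiv : Continuous (deriv (price t x b)) := contDiff_price.continuous_deriv le_rfl
  unfold revenue IccExtend
  fun_prop

theorem integral_price_mul_eq_revenue (htT : t ≤ T) (hu : IsControl t T ubar u) :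
    ∫ s in t..T, price t x b s * u s = revenue htT x b (cumulative htT hu) := by
  have hint := hu.intervalIntegrable (left_mem_Icc.2 htT) (right_mem_Icc.2 htT)
  have hP : AbsolutelyContinuousOnInterval (price t x b) t T :=
    contDiff_price.contDiffOn.absolutelyContinuousOnInterval
  have hparts := hP.integral_mul_deriv_eq_deriv_mul
    (hint.absolutelyContinuousOnInterval_intervalIntegral left_mem_uIcc)
  rw [intervalIntegral.integral_same, mul_zero, sub_zero] at hparts
  have hcum : ∫ r in t..T, deriv (price t x b) r * IccExtend htT (cumulative htT hu) r
      = ∫ r in t..T, deriv (price t x b) r * ∫ v in t..r, u v :=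
    intervalIntegral.integral_congr fun r hr => by
      rw [IccExtend_cumulative htT hu (uIcc_of_le htT ▸ hr)]
  rw [revenue, IccExtend_cumulative htT hu (right_mem_Icc.2 htT), hcum, ← hparts]
  refine intervalIntegral.integral_congr_ae ?_
  filter_upwards [hint.ae_hasDerivAt_integral] with r hr hrΙ
  rw [(hr (uIoc_subset_uIcc hrΙ) t left_mem_uIcc).deriv]

theorem integral_price_mul_sub_eq (htT : t ≤ T) (hu : IsControl t T ubar u) :
    ∫ s in t..T, price t x b s * (u s - ubar)
      = (∫ s in t..T, price t x b s * u s) - G t T ubar x b := by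
  have hcont : Continuous (price t x b) := contDiff_price.continuous
  have hint := (hu.intervalIntegrable (left_mem_Icc.2 htT) (right_mem_Icc.2 htT)).continuousOn_mul
    hcont.continuousOn
  simp_rw [mul_sub]
  rw [intervalIntegral.integral_sub hint ((hcont.mul_const ubar).intervalIntegrable _ _),
    intervalIntegral.integral_mul_const, G, mul_comm]

theorem integral_price_mul_sub_nonpos (htT : t ≤ T) (hx : 0 ≤ x) (hu : IsControl t T ubar u) :
    ∫ s in t..T, price t x b s * (u s - ubar) ≤ 0 := by
  have h := intervalIntegral.integral_nonneg_of_ae_restrict (μ := volume)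
    (f := fun s => -(price t x b s * (u s - ubar))) htT <|
    (ae_restrict_iff' measurableSet_Icc).2 <| hu.2.mono fun s hs hsI =>
      neg_nonneg.2 <| mul_nonpos_of_nonneg_of_nonpos (mul_nonneg hx (Real.exp_pos _).le)
        (sub_nonpos.2 (hs hsI).2)
  rw [intervalIntegral.integral_neg] at h
  exact neg_nonneg.1 h

end Revenue

section Violation

variable {ybar y : ℝ} {β : ℝ → ℝ}

def violation (htT : t ≤ T) (ybar y : ℝ) (β : ℝ → ℝ) (F : Icc t T →ᵇ ℝ) : ℝ :=
  ∫ s in t..T, Metric.infDist (y + (∫ r in t..s, β r) - IccExtend htT F s) (Icc 0 ybar)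

theorem continuous_violation (htT : t ≤ T) (hβ : ∀ a c, IntervalIntegrable β volume a c) :
    Continuous (violation htT ybar y β) := by
  have hB : Continuous fun s => ∫ r in t..s, β r := intervalIntegral.continuous_primitive hβ t
  have hdist : Continuous fun z : ℝ => Metric.infDist z (Icc 0 ybar) :=
    Metric.continuous_infDist_pt _
  unfold violation IccExtend
  fun_prop

theorem traj_eq_sub_cumulative (htT : t ≤ T) (hβ : ∀ a c, IntervalIntegrable β volume a c)
    (hu : IsControl t T ubar u) {s : ℝ} (hs : s ∈ Icc t T) :
    traj t β y u s = y + (∫ r in t..s, β r) - IccExtend htT (cumulative htT hu) s := by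
  rw [traj, intervalIntegral.integral_sub (hβ t s) (hu.intervalIntegrable (left_mem_Icc.2 htT) hs),
    IccExtend_cumulative htT hu hs, add_sub_assoc]

theorem violation_cumulative (htT : t ≤ T) (hβ : ∀ a c, IntervalIntegrable β volume a c)
    (hu : IsControl t T ubar u) :
    violation htT ybar y β (cumulative htT hu)
      = ∫ s in t..T, Metric.infDist (traj t β y u s) (Icc 0 ybar) :=
  intervalIntegral.integral_congr fun s hs => by
    rw [traj_eq_sub_cumulative htT hβ hu (uIcc_of_le htT ▸ hs)]

theorem mem_Icc_of_violation_eq_zero (htT : t ≤ T) (hβ : ∀ a c, IntervalIntegrable β volume a c)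
    (hy : y ∈ Icc 0 ybar) {F : Icc t T →ᵇ ℝ} (hF0 : F ⟨t, left_mem_Icc.2 htT⟩ = 0)
    (hF : violation htT ybar y β F = 0) {s : ℝ} (hs : s ∈ Icc t T) :
    y + (∫ r in t..s, β r) - IccExtend htT F s ∈ Icc 0 ybar := by
  rw [isClosed_Icc.mem_iff_infDist_zero ⟨y, hy⟩]
  rcases htT.eq_or_lt with rfl | htT'
  · rw [Icc_self, mem_singleton_iff] at hs
    subst hs
    rw [intervalIntegral.integral_same, IccExtend_left, hF0, add_zero, sub_zero]
    exact Metric.infDist_zero_of_mem hy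
  by_contra hne
  have hB : Continuous fun s => ∫ r in t..s, β r := intervalIntegral.continuous_primitive hβ t
  have hpos := intervalIntegral.integral_pos htT' (f := fun s =>
      Metric.infDist (y + (∫ r in t..s, β r) - IccExtend htT F s) (Icc 0 ybar))
    (Continuous.continuousOn (by unfold IccExtend; fun_prop))
    (fun _ _ => Metric.infDist_nonneg)
    ⟨s, hs, lt_of_le_of_ne Metric.infDist_nonneg (Ne.symm hne)⟩
  exact hpos.ne' hF

end Violation

section Optimality

variable {x b ybar y z : ℝ} {β : ℝ → ℝ}

theorem exists_admissible_le_of_tendsto (htT : t ≤ T) (hub : 0 ≤ ubar)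
    (hβ : ∀ a c, IntervalIntegrable β volume a c) (hy : y ∈ Icc 0 ybar) {c : ℝ} {ε : ℕ → ℝ}
    (hε : Tendsto ε atTop (𝓝 0)) {u : ℕ → ℝ → ℝ} (hu : ∀ n, IsControl t T ubar (u n))
    (hprofit : ∀ n, c - ε n ≤ ∫ s in t..T, price t x b s * (u n s - ubar))
    (hviol : ∀ n, ∫ s in t..T, Metric.infDist (traj t β y (u n) s) (Icc 0 ybar) ≤ ε n) :
    ∃ v, Admissible t T ubar ybar β y v ∧ c ≤ ∫ s in t..T, price t x b s * (v s - ubar) := by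
  obtain ⟨F, hF, φ, hφ, hlim⟩ := (isCompact_cumulativeSet htT).tendsto_subseq
    fun n => cumulative_mem_cumulativeSet htT (hu n)
  have hεφ := hε.comp hφ.tendsto_atTop
  have hrev : c + G t T ubar x b ≤ revenue htT x b F := by
    refine le_of_tendsto_of_tendsto' (by simpa using (hεφ.const_sub c).add_const (G t T ubar x b))
      (((continuous_revenue htT).tendsto F).comp hlim) fun n => ?_
    have := hprofit (φ n)
    rw [integral_price_mul_sub_eq htT (hu (φ n)), integral_price_mul_eq_revenue htT (hu (φ n))]
      at this
    simp only [Function.comp_apply]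
    linarith
  have hviolF : violation htT ybar y β F = 0 := by
    refine le_antisymm ?_ (intervalIntegral.integral_nonneg htT fun _ _ => Metric.infDist_nonneg)
    refine le_of_tendsto_of_tendsto' (((continuous_violation htT hβ).tendsto F).comp hlim) hεφ
      fun n => ?_
    simpa only [Function.comp_apply, violation_cumulative htT hβ] using hviol (φ n)
  obtain ⟨v, hv, rfl⟩ := exists_cumulative_eq htT hub hF
  refine ⟨v, ⟨hv, fun s hs => ?_⟩, ?_⟩
  · rw [traj_eq_sub_cumulative htT hβ hv hs]
    exact mem_Icc_of_violation_eq_zero htT hβ hy hF.1 hviolF hs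
  · rw [integral_price_mul_sub_eq htT hv, integral_price_mul_eq_revenue htT hv]
    linarith

theorem levelCost_nonneg (htT : t ≤ T) (u : ℝ → ℝ) :
    0 ≤ levelCost t T ubar ybar x b β y z u :=
  add_nonneg (le_max_right _ _) (intervalIntegral.integral_nonneg htT fun _ _ =>
    Metric.infDist_nonneg)

theorem W_eq_zero_of_admissible (htT : t ≤ T) (hu : Admissible t T ubar ybar β y u)
    (hz : z ≤ ∫ s in t..T, price t x b s * (u s - ubar)) :
    W t T ubar ybar x b β y z = 0 := by
  have hcost : levelCost t T ubar ybar x b β y z u = 0 := by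
    rw [levelCost, max_eq_right (sub_nonpos.2 hz), zero_add]
    exact (intervalIntegral.integral_congr fun s hs =>
      Metric.infDist_zero_of_mem (hu.2 s (uIcc_of_le htT ▸ hs))).trans
      intervalIntegral.integral_zero
  refine IsLeast.csInf_eq ⟨⟨u, hu.1, hcost.symm⟩, ?_⟩
  rintro _ ⟨v, -, rfl⟩
  exact levelCost_nonneg htT v

theorem exists_levelCost_lt_of_W_eq_zero (hne : ∃ u, IsControl t T ubar u)
    (hW : W t T ubar ybar x b β y z = 0) {ε : ℝ} (hε : 0 < ε) :
    ∃ u, IsControl t T ubar u ∧ levelCost t T ubar ybar x b β y z u < ε := by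
  obtain ⟨u, hu⟩ := hne
  have hlt : W t T ubar ybar x b β y z < ε := hW.symm ▸ hε
  obtain ⟨_, ⟨v, hv, rfl⟩, hcost⟩ := exists_lt_of_csInf_lt (by exact ⟨_, u, hu, rfl⟩) hlt
  exact ⟨v, hv, hcost⟩

theorem exists_admissible_sSup_le (htT : t ≤ T) (hub : 0 ≤ ubar)
    (hβ : ∀ a c, IntervalIntegrable β volume a c) (hx : 0 ≤ x)
    (hadm : ∃ u, Admissible t T ubar ybar β y u) :
    ∃ u, Admissible t T ubar ybar β y u ∧
      sSup {z : ℝ | z ≤ 0 ∧ W t T ubar ybar x b β y z = 0}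
        ≤ ∫ s in t..T, price t x b s * (u s - ubar) := by
  obtain ⟨u₀, hu₀⟩ := hadm
  set S := {z : ℝ | z ≤ 0 ∧ W t T ubar ybar x b β y z = 0}
  have hy : y ∈ Icc 0 ybar := by simpa [traj] using hu₀.2 t (left_mem_Icc.2 htT)
  have hS : S.Nonempty :=
    ⟨_, integral_price_mul_sub_nonpos htT hx hu₀.1, W_eq_zero_of_admissible htT hu₀ le_rfl⟩
  have happrox (n : ℕ) : ∃ u, IsControl t T ubar u ∧
      sSup S - 2 * (1 / ((n : ℝ) + 1)) ≤ ∫ s in t..T, price t x b s * (u s - ubar) ∧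
      ∫ s in t..T, Metric.infDist (traj t β y u s) (Icc 0 ybar) ≤ 2 * (1 / ((n : ℝ) + 1)) := by
    have hδ : (0 : ℝ) < 1 / ((n : ℝ) + 1) := Nat.one_div_pos_of_nat
    obtain ⟨z, hzS, hz⟩ := exists_lt_of_lt_csSup hS (sub_lt_self (sSup S) hδ)
    obtain ⟨u, hu, hcost⟩ := exists_levelCost_lt_of_W_eq_zero ⟨u₀, hu₀.1⟩ hzS.2 hδ
    have hmax := le_max_left (z - ∫ s in t..T, price t x b s * (u s - ubar)) 0
    have hmax' := le_max_right (z - ∫ s in t..T, price t x b s * (u s - ubar)) 0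
    have hviol : 0 ≤ ∫ s in t..T, Metric.infDist (traj t β y u s) (Icc 0 ybar) :=
      intervalIntegral.integral_nonneg htT fun _ _ => Metric.infDist_nonneg
    unfold levelCost at hcost
    exact ⟨u, hu, by linarith, by linarith⟩
  choose u hu hprofit hviol using happrox
  exact exists_admissible_le_of_tendsto htT hub hβ hy
    (by simpa using tendsto_one_div_add_atTop_nhds_zero_nat.const_mul (2 : ℝ)) hu hprofit hviol

end Optimality

end

theorem stmt2_general (t T ubar ybar b x y : ℝ) (β : ℝ → ℝ)
    (htT : t ≤ T) (hub : 0 < ubar)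
    (hβm : Measurable β) (hβb : ∃ M, ∀ s, |β s| ≤ M)
    (hx : 0 ≤ x) (hadm : ∃ u, Admissible t T ubar ybar β y u) :
    W t T ubar ybar x b β y (sSup {z : ℝ | z ≤ 0 ∧ W t T ubar ybar x b β y z = 0}) = 0 ∧
    (∃ u, Admissible t T ubar ybar β y u ∧
      sSup {z : ℝ | z ≤ 0 ∧ W t T ubar ybar x b β y z = 0}
        ≤ ∫ s in t..T, price t x b s * (u s - ubar)) ∧
    (∀ u, Admissible t T ubar ybar β y u →
      sSup {z : ℝ | z ≤ 0 ∧ W t T ubar ybar x b β y z = 0}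
        ≤ ∫ s in t..T, price t x b s * (u s - ubar) →
      (∫ s in t..T, price t x b s * u s)
        = sSup {v : ℝ | ∃ u', Admissible t T ubar ybar β y u' ∧
            v = ∫ s in t..T, price t x b s * u' s}) := by
  have hβ (a c : ℝ) : IntervalIntegrable β volume a c := by
    obtain ⟨M, hM⟩ := hβb
    exact (intervalIntegrable_const (c := M)).mono_fun hβm.aestronglyMeasurable
      (ae_of_all _ fun s => (hM s).trans (le_abs_self M))
  set S := {z : ℝ | z ≤ 0 ∧ W t T ubar ybar x b β y z = 0}
  have hmem (u : ℝ → ℝ) (hu : Admissible t T ubar ybar β y u) :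
      ∫ s in t..T, price t x b s * (u s - ubar) ∈ S :=
    ⟨integral_price_mul_sub_nonpos htT hx hu.1, W_eq_zero_of_admissible htT hu le_rfl⟩
  have hbdd : BddAbove S := ⟨0, fun _ hz => hz.1⟩
  obtain ⟨u₀, hu₀, hle⟩ := exists_admissible_sSup_le htT hub.le hβ hx hadm
  have hsSup : sSup S = ∫ s in t..T, price t x b s * (u₀ s - ubar) :=
    le_antisymm hle (le_csSup hbdd (hmem u₀ hu₀))
  refine ⟨by rw [hsSup]; exact (hmem u₀ hu₀).2, ⟨u₀, hu₀, hle⟩, fun u hu hge => ?_⟩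
  symm
  refine IsGreatest.csSup_eq ⟨⟨u, hu, rfl⟩, ?_⟩
  rintro _ ⟨v, hv, rfl⟩
  have hvu := (le_csSup hbdd (hmem v hv)).trans hge
  rwa [integral_price_mul_sub_eq htT hv.1, integral_price_mul_sub_eq htT hu.1,
    sub_le_sub_iff_right] at hvu

/-- Corollary 5.4 (deterministic-price instance): `z* = sSup{z ≤ 0 : W = 0}` satisfies
`W(t,x,y,z*) = 0`; an admissible `u*` with `∫_t^T P(s)(u*(s) − ū) ds ≥ z*` exists, and every
such `u*` is optimal for the constrained problem. -/
theorem stmt2 (t T ubar ybar b x y : ℝ) (β : ℝ → ℝ)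
    (ht : 0 ≤ t) (htT : t ≤ T) (hub : 0 < ubar) (hyb : 0 < ybar)
    (hβm : Measurable β) (hβb : ∃ M, ∀ s, |β s| ≤ M)
    (hx : 0 ≤ x) (hadm : ∃ u, Admissible t T ubar ybar β y u) :
    W t T ubar ybar x b β y (sSup {z : ℝ | z ≤ 0 ∧ W t T ubar ybar x b β y z = 0}) = 0 ∧
    (∃ u, Admissible t T ubar ybar β y u ∧
      sSup {z : ℝ | z ≤ 0 ∧ W t T ubar ybar x b β y z = 0}
        ≤ ∫ s in t..T, price t x b s * (u s - ubar)) ∧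
    (∀ u, Admissible t T ubar ybar β y u →
      sSup {z : ℝ | z ≤ 0 ∧ W t T ubar ybar x b β y z = 0}
        ≤ ∫ s in t..T, price t x b s * (u s - ubar) →
      (∫ s in t..T, price t x b s * u s)
        = sSup {v : ℝ | ∃ u', Admissible t T ubar ybar β y u' ∧
            v = ∫ s in t..T, price t x b s * u' s}) :=
  stmt2_general t T ubar ybar b x y β htT hub hβm hβb hx hadm
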